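/- There exists an absolute constant C > 0 such that for every real R ≥ 1, every η ∈ (0,1), every sign s ∈ {+1, −1}, and every nonzero real r, one has |h_{R+sη}(r)·h_η(r)/(π(sinh(2η) − 2η))| ≤ C·R·e^R / ((1+|r|)²·(1+η|r|)²). -/

import Mathlib

open MeasureTheory

/-- The Selberg transform of the indicator of a hyperbolic ball of radius `ρ` in `ℍ³`,
as a function of a real spectral parameter `r`. -/
noncomputable def hSel (ρ r : ℝ) : ℝ :=
  (4 * Real.pi / r) * ∫ u in (0:ℝ)..ρ, Real.sin (r * u) * Real.sinh u

/-- The smoothed Selberg transform `h_± = h_{R+sη} · h_η / μ(B_η)`,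
where `μ(B_η) = π(sinh(2η) − 2η)`. -/
noncomputable def hPM (R η s r : ℝ) : ℝ :=
  hSel (R + s * η) r * hSel η r / (Real.pi * (Real.sinh (2 * η) - 2 * η))
/-!
The integral defining `h_ρ` has the closed form
`(sin(rρ) cosh ρ - r cos(rρ) sinh ρ) / (1 + r²)`, so `|h_ρ(r)| ≤ 8π (ρ + 1) e^ρ / (1 + |r|)²`
once `|sin(rρ)| ≤ |r|ρ` is used. For the mollifier radius `η ≤ 1` one needs the sharper
`|h_η(r)| ≲ η³ / (1 + η|r|)²`: for `η|r| ≤ 1` it comes from `|sin(ru) sinh u| ≲ |r| u²` under the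
integral, for `η|r| ≥ 1` from the closed form with `|sin| ≤ 1`. The factor `η³` is cancelled by
`μ(B_η) = π(sinh 2η - 2η) ≥ 4πη³/3`, read off the power series of `sinh`.
-/

open Real

lemma integral_sin_mul_sinh (r ρ : ℝ) :
    ∫ u in (0:ℝ)..ρ, sin (r * u) * sinh u
      = (sin (r * ρ) * cosh ρ - r * cos (r * ρ) * sinh ρ) / (1 + r ^ 2) := by
  have hderiv : ∀ u ∈ Set.uIcc (0:ℝ) ρ,
      HasDerivAt (fun u => (sin (r * u) * cosh u - r * (cos (r * u) * sinh u)) / (1 + r ^ 2))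
        (sin (r * u) * sinh u) u := by
    intro u _
    have hru : HasDerivAt (fun u : ℝ => r * u) r u := by
      simpa using (hasDerivAt_id u).const_mul r
    refine (((hru.sin.mul (hasDerivAt_cosh u)).sub
      ((hru.cos.mul (hasDerivAt_sinh u)).const_mul r)).div_const (1 + r ^ 2)).congr_deriv ?_
    field_simp
    ring
  rw [intervalIntegral.integral_eq_sub_of_hasDerivAt hderiv
    (Continuous.intervalIntegrable (by fun_prop) _ _)]
  simp only [mul_zero, sin_zero, cosh_zero, cos_zero, sinh_zero]
  ring

lemma hSel_eq_of_ne_zero {r : ℝ} (hr : r ≠ 0) (ρ : ℝ) :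
    hSel ρ r = 4 * π * (sin (r * ρ) * cosh ρ - r * cos (r * ρ) * sinh ρ) / (r * (1 + r ^ 2)) := by
  rw [hSel, integral_sin_mul_sinh]
  field_simp

lemma abs_hSel_le {ρ r a : ℝ} (hρ : 0 ≤ ρ) (hr : r ≠ 0) (ha : |sin (r * ρ)| ≤ a) :
    |hSel ρ r| ≤ 4 * π * (a * cosh ρ + |r| * sinh ρ) / (|r| * (1 + r ^ 2)) := by
  have hnum : |sin (r * ρ) * cosh ρ - r * cos (r * ρ) * sinh ρ| ≤ a * cosh ρ + |r| * sinh ρ := by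
    have hcos : |r * cos (r * ρ) * sinh ρ| ≤ |r| * sinh ρ := by
      rw [abs_mul, abs_mul, abs_of_nonneg (sinh_nonneg_iff.mpr hρ)]
      gcongr
      exact mul_le_of_le_one_right (abs_nonneg r) (abs_cos_le_one _)
    calc _ ≤ |sin (r * ρ) * cosh ρ| + |r * cos (r * ρ) * sinh ρ| := abs_sub _ _
      _ ≤ a * cosh ρ + |r| * sinh ρ := by
        rw [abs_mul, abs_of_pos (cosh_pos ρ)]
        gcongr
  rw [hSel_eq_of_ne_zero hr, abs_div, abs_mul (4 * π), abs_mul r,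
    abs_of_pos (by positivity : (0:ℝ) < 4 * π), abs_of_pos (by positivity : (0:ℝ) < 1 + r ^ 2)]
  gcongr

lemma abs_hSel_le_mul_exp {ρ r : ℝ} (hρ : 0 ≤ ρ) (hr : r ≠ 0) :
    |hSel ρ r| ≤ 8 * π * ((ρ + 1) * exp ρ) / (1 + |r|) ^ 2 := by
  have hsin : |sin (r * ρ)| ≤ |r| * ρ := by
    simpa [abs_mul, abs_of_nonneg hρ] using abs_sin_le_abs (x := r * ρ)
  have hr0 : 0 < |r| := abs_pos.mpr hr
  have hexp : ρ * cosh ρ + sinh ρ ≤ (ρ + 1) * exp ρ := by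
    rw [← cosh_add_sinh]
    nlinarith [sinh_nonneg_iff.mpr hρ, cosh_pos ρ]
  have hden : (1 + |r|) ^ 2 ≤ 2 * (1 + r ^ 2) := by
    nlinarith [sq_abs r, sq_nonneg (1 - |r|)]
  calc |hSel ρ r| ≤ 4 * π * (|r| * ρ * cosh ρ + |r| * sinh ρ) / (|r| * (1 + r ^ 2)) :=
        abs_hSel_le hρ hr hsin
    _ = 4 * π * (ρ * cosh ρ + sinh ρ) / (1 + r ^ 2) := by
        field_simp
    _ ≤ 4 * π * ((ρ + 1) * exp ρ) / ((1 + |r|) ^ 2 / 2) := by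
        gcongr
        linarith
    _ = 8 * π * ((ρ + 1) * exp ρ) / (1 + |r|) ^ 2 := by
        field_simp
        ring

lemma sinh_le_mul_sinh_one {u : ℝ} (hu0 : 0 ≤ u) (hu1 : u ≤ 1) : sinh u ≤ u * sinh 1 := by
  refine hasSum_le (fun n => ?_) (hasSum_sinh u) ((hasSum_sinh 1).mul_left u)
  rw [one_pow, mul_one_div]
  gcongr
  calc u ^ (2 * n + 1) = u * u ^ (2 * n) := pow_succ' u _
    _ ≤ u := mul_le_of_le_one_right hu0 (pow_le_one₀ hu0 hu1)

lemma cube_div_six_le_sinh_sub_self {x : ℝ} (hx : 0 ≤ x) : x ^ 3 / 6 ≤ sinh x - x := by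
  have := sum_le_hasSum (Finset.range 2) (fun n _ => by positivity) (hasSum_sinh x)
  norm_num [Finset.sum_range_succ, Nat.factorial] at this
  linarith

lemma abs_hSel_le_cube {ρ : ℝ} (hρ0 : 0 ≤ ρ) (hρ1 : ρ ≤ 1) (r : ℝ) :
    |hSel ρ r| ≤ 4 * π * sinh 1 * ρ ^ 3 / 3 := by
  rcases eq_or_ne r 0 with rfl | hr
  · simp only [hSel, div_zero, zero_mul, abs_zero]
    positivity
  have hint : |∫ u in (0:ℝ)..ρ, sin (r * u) * sinh u| ≤ |r| * sinh 1 * (ρ ^ 3 / 3) := by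
    have := intervalIntegral.norm_integral_le_of_norm_le hρ0
      (μ := volume) (g := fun u => |r| * sinh 1 * u ^ 2) (f := fun u => sin (r * u) * sinh u)
      (Filter.Eventually.of_forall fun u hu => ?_) (Continuous.intervalIntegrable (by fun_prop) _ _)
    · norm_num [intervalIntegral.integral_const_mul, integral_pow] at this
      exact this
    have hu0 : 0 ≤ u := hu.1.le
    have hsin : |sin (r * u)| ≤ |r| * u := by
      simpa [abs_mul, abs_of_nonneg hu0] using abs_sin_le_abs (x := r * u)
    have hsinh : |sinh u| ≤ u * sinh 1 := by
      rw [abs_of_nonneg (sinh_nonneg_iff.mpr hu0)]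
      exact sinh_le_mul_sinh_one hu0 (hu.2.trans hρ1)
    calc ‖sin (r * u) * sinh u‖ = |sin (r * u)| * |sinh u| := abs_mul _ _
      _ ≤ (|r| * u) * (u * sinh 1) := by gcongr
      _ = |r| * sinh 1 * u ^ 2 := by ring
  have hr0 : 0 < |r| := abs_pos.mpr hr
  rw [hSel, abs_mul, abs_div, abs_of_pos (by positivity : (0:ℝ) < 4 * π), div_mul_eq_mul_div,
    div_le_iff₀ hr0]
  calc 4 * π * |∫ u in (0:ℝ)..ρ, sin (r * u) * sinh u|
      ≤ 4 * π * (|r| * sinh 1 * (ρ ^ 3 / 3)) := by gcongr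
    _ = 4 * π * sinh 1 * ρ ^ 3 / 3 * |r| := by ring

lemma abs_hSel_le_of_le_one {ρ r : ℝ} (hρ0 : 0 ≤ ρ) (hρ1 : ρ ≤ 1) (hr : r ≠ 0) :
    |hSel ρ r| ≤ 32 * π * cosh 1 * ρ ^ 3 / (1 + ρ * |r|) ^ 2 := by
  set t := ρ * |r| with ht
  have hr0 : 0 < |r| := abs_pos.mpr hr
  rcases le_or_gt t 1 with ht1 | ht1
  · have h8 : 1 ≤ 8 / (1 + t) ^ 2 := by
      rw [le_div_iff₀ (by positivity)]
      nlinarith [(by positivity : 0 ≤ t)]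
    calc |hSel ρ r| ≤ 4 * π * sinh 1 * ρ ^ 3 / 3 := abs_hSel_le_cube hρ0 hρ1 r
      _ ≤ 4 * π * sinh 1 * ρ ^ 3 := div_le_self (by positivity) (by norm_num)
      _ ≤ 4 * π * cosh 1 * ρ ^ 3 * (8 / (1 + t) ^ 2) := by
        rw [← mul_one (4 * π * sinh 1 * ρ ^ 3)]
        gcongr
        exact (sinh_lt_cosh 1).le
      _ = 32 * π * cosh 1 * ρ ^ 3 / (1 + t) ^ 2 := by ring
  · have hρpos : 0 < ρ := by
      by_contra! h
      nlinarith
    have hnum : 1 * cosh ρ + |r| * sinh ρ ≤ cosh 1 * (1 + t) := by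
      have hcosh : cosh ρ ≤ cosh 1 := by
        rw [cosh_le_cosh, abs_of_nonneg hρ0, abs_one]
        exact hρ1
      have hsinh : sinh ρ ≤ ρ * cosh 1 :=
        (sinh_le_mul_sinh_one hρ0 hρ1).trans (by gcongr; exact (sinh_lt_cosh 1).le)
      nlinarith
    have hden : |r| ^ 3 ≤ |r| * (1 + r ^ 2) := by
      nlinarith [sq_abs r]
    have hcube : (1 + t) ^ 3 ≤ 8 * t ^ 3 := by
      nlinarith [pow_le_pow_left₀ (by positivity) (by linarith : 1 + t ≤ 2 * t) 3]
    calc |hSel ρ r| ≤ 4 * π * (1 * cosh ρ + |r| * sinh ρ) / (|r| * (1 + r ^ 2)) :=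
          abs_hSel_le hρ0 hr (abs_sin_le_one _)
      _ ≤ 4 * π * (cosh 1 * (1 + t)) / |r| ^ 3 := by gcongr
      _ = 4 * π * cosh 1 * ρ ^ 3 * ((1 + t) / t ^ 3) := by
        rw [ht]
        field_simp
      _ ≤ 4 * π * cosh 1 * ρ ^ 3 * (8 / (1 + t) ^ 2) := by
        refine mul_le_mul_of_nonneg_left ?_ (by positivity)
        rw [div_le_div_iff₀ (by positivity) (by positivity)]
        nlinarith
      _ = 32 * π * cosh 1 * ρ ^ 3 / (1 + t) ^ 2 := by ring

lemma abs_hSel_le_of_le_add_one {R ρ r : ℝ} (hR : 1 ≤ R) (hρ0 : 0 ≤ ρ) (hρR : ρ ≤ R + 1)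
    (hr : r ≠ 0) : |hSel ρ r| ≤ 24 * π * exp 1 * R * exp R / (1 + |r|) ^ 2 := by
  have hexp : (ρ + 1) * exp ρ ≤ 3 * exp 1 * R * exp R :=
    calc (ρ + 1) * exp ρ ≤ (3 * R) * exp (1 + R) := by
          gcongr ?_ * exp ?_ <;> linarith
      _ = 3 * exp 1 * R * exp R := by rw [exp_add]; ring
  calc |hSel ρ r| ≤ 8 * π * ((ρ + 1) * exp ρ) / (1 + |r|) ^ 2 := abs_hSel_le_mul_exp hρ0 hr
    _ ≤ 8 * π * (3 * exp 1 * R * exp R) / (1 + |r|) ^ 2 := by gcongr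
    _ = 24 * π * exp 1 * R * exp R / (1 + |r|) ^ 2 := by ring

lemma pi_mul_cube_le_pi_mul_sinh_two_mul_sub {η : ℝ} (hη : 0 ≤ η) :
    4 * π / 3 * η ^ 3 ≤ π * (sinh (2 * η) - 2 * η) :=
  calc 4 * π / 3 * η ^ 3 = π * ((2 * η) ^ 3 / 6) := by ring
    _ ≤ π * (sinh (2 * η) - 2 * η) := by
      gcongr
      exact cube_div_six_le_sinh_sub_self (by positivity)

/-- Uniform bound `|h_±(r)| ≤ C R e^R / ((1+|r|)² (1+η|r|)²)` for `R ≥ 1`, `η ∈ (0,1)`,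
sign `s = ±1`, and nonzero real `r`. -/
theorem hPM_decay_bound :
    ∃ C : ℝ, 0 < C ∧ ∀ R : ℝ, 1 ≤ R → ∀ η : ℝ, 0 < η → η < 1 →
      ∀ s : ℝ, (s = 1 ∨ s = -1) → ∀ r : ℝ, r ≠ 0 →
        |hPM R η s r|
          ≤ C * R * Real.exp R / ((1 + |r|) ^ 2 * (1 + η * |r|) ^ 2) := by
  refine ⟨576 * π * exp 1 * cosh 1, by positivity, ?_⟩
  intro R hR η hη0 hη1 s hs r hr
  have hρ : 0 ≤ R + s * η ∧ R + s * η ≤ R + 1 := by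
    rcases hs with rfl | rfl <;> constructor <;> linarith
  have hvol := pi_mul_cube_le_pi_mul_sinh_two_mul_sub hη0.le
  rw [hPM, abs_div, abs_mul, abs_of_pos (hvol.trans_lt' (by positivity))]
  calc |hSel (R + s * η) r| * |hSel η r| / (π * (sinh (2 * η) - 2 * η))
      ≤ (24 * π * exp 1 * R * exp R / (1 + |r|) ^ 2)
          * (32 * π * cosh 1 * η ^ 3 / (1 + η * |r|) ^ 2) / (4 * π / 3 * η ^ 3) := by
        gcongr
        · exact abs_hSel_le_of_le_add_one hR hρ.1 hρ.2 hr
        · exact abs_hSel_le_of_le_one hη0.le hη1.le hr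
    _ = 576 * π * exp 1 * cosh 1 * R * exp R / ((1 + |r|) ^ 2 * (1 + η * |r|) ^ 2) := by
        field_simp
        ring
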